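/- arXiv:2204.08313 — 2 statements merged into one kernel-verified Lean document; each statement's English description precedes it below -/
import Mathlib

section
/- Let $1 \le p \le q < s$, $1 \le r \le s$ and $T \in \mathcal{L}(U;X)$. Then $T$ is weakly anisotropic $(s,q,r;p)$-summing if and only if for every $x^* = (x_k^*)_{k=1}^\infty$ in the unit ball of $\ell_r(X^*)$, the composition $\Psi_{x^*} \circ T : U \to \ell_s$ is absolutely $(q,p)$-summing, where $\Psi_{x^*}(x) = (x_k^*(x))_{k=1}^\infty$. -/
/-! The inner series converge because `ℓ_r ⊆ ℓ_s` for `r ≤ s` and `|x_k^*(x)| ≤ ‖x_k^*‖ ‖x‖`. The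
mixed sum `∑_j (∑_k |x_k^*(T u_j)|^s)^{q/s}` is positively homogeneous of degree `q` in `(x_k^*)`,
so testing it on the unit ball of `ℓ_r(X^*)` is the same as testing it on all of `ℓ_r(X^*)`. -/

open scoped BigOperators NNReal ENNReal

noncomputable section

/-- `(xs k)` belongs to `ℓ_r(X*)`. -/
def MemLr (r : ℝ) {X : Type*} [NormedAddCommGroup X] [NormedSpace ℝ X]
    (xs : ℕ → X →L[ℝ] ℝ) : Prop :=
  Summable fun k => ‖xs k‖ ^ r

/-- The `ℓ_r(X*)` norm. -/
noncomputable def lrNorm (r : ℝ) {X : Type*} [NormedAddCommGroup X] [NormedSpace ℝ X]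
    (xs : ℕ → X →L[ℝ] ℝ) : ℝ :=
  (∑' k, ‖xs k‖ ^ r) ^ (1 / r)

/-- Weakly `q`-summable sequences. -/
def WeaklySummable (q : ℝ) {X : Type*} [NormedAddCommGroup X] [NormedSpace ℝ X]
    (x : ℕ → X) : Prop :=
  ∀ f : X →L[ℝ] ℝ, Summable fun j => |f (x j)| ^ q

/-- The weak `ℓ_q` norm. -/
noncomputable def weakNorm (q : ℝ) {X : Type*} [NormedAddCommGroup X] [NormedSpace ℝ X]
    (x : ℕ → X) : ℝ :=
  ⨆ f : {f : X →L[ℝ] ℝ // ‖f‖ ≤ 1}, (∑' j, |f.1 (x j)| ^ q) ^ (1 / q)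

/-- Anisotropic `(s,q,r)`-summable sequences. -/
def AnisoSummable (s q r : ℝ) {X : Type*} [NormedAddCommGroup X] [NormedSpace ℝ X]
    (x : ℕ → X) : Prop :=
  ∀ xs : ℕ → X →L[ℝ] ℝ, MemLr r xs →
    (∀ j, Summable fun k => |xs k (x j)| ^ s) ∧
      Summable fun j => (∑' k, |xs k (x j)| ^ s) ^ (q / s)

/-- The anisotropic `(s,q,r)` norm. -/
noncomputable def anisoNorm (s q r : ℝ) {X : Type*} [NormedAddCommGroup X] [NormedSpace ℝ X]
    (x : ℕ → X) : ℝ :=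
  ⨆ xs : {xs : ℕ → X →L[ℝ] ℝ // MemLr r xs ∧ lrNorm r xs ≤ 1},
    (∑' j, (∑' k, |xs.1 k (x j)| ^ s) ^ (q / s)) ^ (1 / q)

/-- Weakly anisotropic `(s,q,r;p)`-summing operators. -/
def WeaklyAnisoSumming (s q r p : ℝ) {U X : Type*} [NormedAddCommGroup U] [NormedSpace ℝ U]
    [NormedAddCommGroup X] [NormedSpace ℝ X] (T : U →L[ℝ] X) : Prop :=
  ∀ u : ℕ → U, WeaklySummable p u → AnisoSummable s q r fun j => T (u j)

section LrSequences

variable {X : Type*} [NormedAddCommGroup X] [NormedSpace ℝ X] {r s : ℝ} {xs : ℕ → X →L[ℝ] ℝ}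

theorem MemLr.memℓp (hr : 0 < r) (h : MemLr r xs) : Memℓp xs (ENNReal.ofReal r) :=
  memℓp_gen (by rwa [ENNReal.toReal_ofReal hr.le])

theorem MemLr.summable_abs_apply_rpow (hr : 0 < r) (hrs : r ≤ s) (h : MemLr r xs) (x : X) :
    Summable fun k => |xs k x| ^ s := by
  have hs : 0 < s := hr.trans_le hrs
  have hmem : Memℓp (fun k => xs k x) (ENNReal.ofReal s) :=
    (((h.memℓp hr).of_exponent_ge (ENNReal.ofReal_le_ofReal hrs)).norm.const_mul ‖x‖).mono
      fun k => by rw [mul_comm]; exact (xs k).le_opNorm x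
  simpa only [ENNReal.toReal_ofReal hs.le, Real.norm_eq_abs] using
    hmem.summable (by rwa [ENNReal.toReal_ofReal hs.le])

theorem MemLr.const_smul (h : MemLr r xs) (a : ℝ) : MemLr r fun k => a • xs k := by
  unfold MemLr
  simp_rw [norm_smul, Real.norm_eq_abs, Real.mul_rpow (abs_nonneg a) (norm_nonneg _)]
  exact h.mul_left _

theorem lrNorm_nonneg (r : ℝ) (xs : ℕ → X →L[ℝ] ℝ) : 0 ≤ lrNorm r xs :=
  Real.rpow_nonneg (tsum_nonneg fun _ => Real.rpow_nonneg (norm_nonneg _) _) _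

theorem lrNorm_const_smul (hr : r ≠ 0) (a : ℝ) (xs : ℕ → X →L[ℝ] ℝ) :
    lrNorm r (fun k => a • xs k) = |a| * lrNorm r xs := by
  unfold lrNorm
  simp_rw [norm_smul, Real.norm_eq_abs, Real.mul_rpow (abs_nonneg a) (norm_nonneg _),
    tsum_mul_left]
  rw [Real.mul_rpow (Real.rpow_nonneg (abs_nonneg a) r)
      (tsum_nonneg fun _ => Real.rpow_nonneg (norm_nonneg _) _),
    ← Real.rpow_mul (abs_nonneg a), mul_one_div_cancel hr, Real.rpow_one]

theorem MemLr.exists_eq_const_smul_lrNorm_le_one (hr : r ≠ 0) (h : MemLr r xs) :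
    ∃ c : ℝ, ∃ ys : ℕ → X →L[ℝ] ℝ, MemLr r ys ∧ lrNorm r ys ≤ 1 ∧ xs = fun k => c • ys k := by
  set c := lrNorm r xs + 1
  have hc : 0 < c := by have := lrNorm_nonneg r xs; positivity
  refine ⟨c, fun k => c⁻¹ • xs k, h.const_smul _, ?_, ?_⟩
  · rw [lrNorm_const_smul hr, abs_of_pos (inv_pos.mpr hc), inv_mul_le_one₀ hc]
    linarith
  · funext k
    rw [smul_smul, mul_inv_cancel₀ hc.ne', one_smul]

theorem tsum_abs_smul_apply_rpow_rpow (hs : s ≠ 0) (q a : ℝ) (xs : ℕ → X →L[ℝ] ℝ) (x : X) :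
    (∑' k, |(a • xs k) x| ^ s) ^ (q / s) = |a| ^ q * (∑' k, |xs k x| ^ s) ^ (q / s) := by
  simp_rw [smul_apply, smul_eq_mul, abs_mul,
    Real.mul_rpow (abs_nonneg a) (abs_nonneg _), tsum_mul_left]
  rw [Real.mul_rpow (Real.rpow_nonneg (abs_nonneg a) s)
      (tsum_nonneg fun _ => Real.rpow_nonneg (abs_nonneg _) _),
    ← Real.rpow_mul (abs_nonneg a), mul_div_cancel₀ q hs]

end LrSequences

theorem stmt16_general {U X : Type*} [NormedAddCommGroup U] [NormedSpace ℝ U]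
    [NormedAddCommGroup X] [NormedSpace ℝ X]
    {s q r p : ℝ} (hr : 1 ≤ r) (hrs : r ≤ s)
    (T : U →L[ℝ] X) :
    WeaklyAnisoSumming s q r p T ↔
      ∀ xs : ℕ → X →L[ℝ] ℝ, MemLr r xs → lrNorm r xs ≤ 1 →
        ∀ u : ℕ → U, WeaklySummable p u →
          Summable fun j => (∑' k, |xs k (T (u j))| ^ s) ^ (q / s) := by
  have hr₀ : 0 < r := zero_lt_one.trans_le hr
  refine ⟨fun hT xs hxs _ u hu => (hT u hu xs hxs).2, fun H u hu xs hxs => ?_⟩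
  refine ⟨fun j => hxs.summable_abs_apply_rpow hr₀ hrs _, ?_⟩
  obtain ⟨c, ys, hys, hys₁, rfl⟩ := hxs.exists_eq_const_smul_lrNorm_le_one hr₀.ne'
  simp_rw [tsum_abs_smul_apply_rpow_rpow (hr₀.trans_le hrs).ne']
  exact (H ys hys hys₁ u hu).mul_left _

theorem stmt16 {U X : Type*} [NormedAddCommGroup U] [NormedSpace ℝ U] [CompleteSpace U]
    [NormedAddCommGroup X] [NormedSpace ℝ X] [CompleteSpace X]
    {s q r p : ℝ} (hp : 1 ≤ p) (hpq : p ≤ q) (hqs : q < s) (hr : 1 ≤ r) (hrs : r ≤ s)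
    (T : U →L[ℝ] X) :
    WeaklyAnisoSumming s q r p T ↔
      ∀ xs : ℕ → X →L[ℝ] ℝ, MemLr r xs → lrNorm r xs ≤ 1 →
        ∀ u : ℕ → U, WeaklySummable p u →
          Summable fun j => (∑' k, |xs k (T (u j))| ^ s) ^ (q / s) :=
  stmt16_general hr hrs T
end
end

section
/- Let $1 \le q < s$, $1 \le r \le s$, $2 \le q$, and suppose the Banach space $X$ has cotype $q$. Then every weakly $1$-summable sequence in $X$ is anisotropic $(s,q,r)$-summable. -/
open scoped BigOperators NNReal ENNReal

noncomputable section

/-- `X` has (Rademacher) cotype `q`, formulated with averages over signs. -/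
def HasCotype (q : ℝ) (X : Type*) [NormedAddCommGroup X] [NormedSpace ℝ X] : Prop :=
  ∃ C : ℝ, 0 < C ∧ ∀ (n : ℕ) (x : Fin n → X),
    (∑ k, ‖x k‖ ^ q) ^ (1 / q) ≤
      C * (((2 : ℝ) ^ n)⁻¹ *
        ∑ ε : Fin n → Bool, ‖∑ k, (if ε k then x k else -x k)‖ ^ 2) ^ (1 / (2 : ℝ))

/-! Testing a weakly `1`-summable sequence against functionals bounds all its signed partial
sums uniformly (Banach–Steinhaus), so the cotype inequality makes it strongly `q`-summable.
Then `ℓ_r ⊆ ℓ_s` and `|x_k^*(x_j)| ≤ ‖x_k^*‖ ‖x_j‖` give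
`∑_k |x_k^*(x_j)|^s ≤ ‖(x_k^*)‖_s^s ‖x_j‖^s`, and raising to the power `q/s` leaves a bound
summable in `j`. -/

theorem exists_norm_le_of_forall_dual_bounded {𝕜 E ι : Type*} [RCLike 𝕜]
    [NormedAddCommGroup E] [NormedSpace 𝕜 E] {y : ι → E}
    (h : ∀ f : StrongDual 𝕜 E, ∃ C, ∀ i, ‖f (y i)‖ ≤ C) : ∃ M, ∀ i, ‖y i‖ ≤ M := by
  -- Banach–Steinhaus applies in the dual, which is complete even when `E` is not.
  obtain ⟨M, hM⟩ := banach_steinhaus (g := fun i => NormedSpace.inclusionInDoubleDual 𝕜 E (y i)) h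
  refine ⟨M, fun i => ?_⟩
  rw [← (NormedSpace.inclusionInDoubleDualLi 𝕜 (E := E)).norm_map (y i)]
  exact hM i

theorem abs_signed_sum_le_tsum {x : ℕ → ℝ} (hx : Summable fun j => |x j|) (n : ℕ)
    (ε : Fin n → Bool) : |∑ k : Fin n, (if ε k then x k else -x k)| ≤ ∑' j, |x j| :=
  calc |∑ k : Fin n, (if ε k then x k else -x k)|
      ≤ ∑ k : Fin n, |if ε k then x k else -x k| := Finset.abs_sum_le_sum_abs _ _
    _ = ∑ k ∈ Finset.range n, |x k| := by
      rw [← Fin.sum_univ_eq_sum_range]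
      exact Finset.sum_congr rfl fun k _ => by cases ε k <;> simp
    _ ≤ ∑' j, |x j| := hx.sum_le_tsum _ fun _ _ => abs_nonneg _

theorem WeaklySummable.exists_norm_signed_sum_le {X : Type*} [NormedAddCommGroup X]
    [NormedSpace ℝ X] {x : ℕ → X} (hx : WeaklySummable 1 x) :
    ∃ M, ∀ (n : ℕ) (ε : Fin n → Bool), ‖∑ k : Fin n, (if ε k then x k else -x k)‖ ≤ M := by
  obtain ⟨M, hM⟩ := exists_norm_le_of_forall_dual_bounded (𝕜 := ℝ)
    (y := fun i : Σ n, Fin n → Bool => ∑ k : Fin i.1, (if i.2 k then x k else -x k))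
    fun f => ⟨_, fun i => by
      simpa [map_sum, apply_ite f] using
        abs_signed_sum_le_tsum (by simpa using hx f) i.1 i.2⟩
  exact ⟨M, fun n ε => hM ⟨n, ε⟩⟩

theorem rpow_one_div_two_mean_sq_le {ι : Type*} [Fintype ι] [Nonempty ι] {g : ι → ℝ} {M : ℝ}
    (hg0 : ∀ i, 0 ≤ g i) (hg : ∀ i, g i ≤ M) :
    ((Fintype.card ι : ℝ)⁻¹ * ∑ i, g i ^ 2) ^ (1 / (2 : ℝ)) ≤ M := by
  have hM : 0 ≤ M := (hg0 (Classical.arbitrary ι)).trans (hg _)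
  have hmean : (Fintype.card ι : ℝ)⁻¹ * ∑ i, g i ^ 2 ≤ M ^ 2 := by
    rw [inv_mul_le_iff₀ (by positivity)]
    calc ∑ i, g i ^ 2 ≤ ∑ _i : ι, M ^ 2 :=
          Finset.sum_le_sum fun i _ => pow_le_pow_left₀ (hg0 i) (hg i) 2
      _ = Fintype.card ι * M ^ 2 := by simp
  rw [one_div, Real.rpow_inv_le_iff_of_pos (by positivity) hM two_pos]
  exact_mod_cast hmean

theorem HasCotype.summable_norm_rpow {X : Type*} [NormedAddCommGroup X] [NormedSpace ℝ X]
    {q : ℝ} (hX : HasCotype q X) (hq : 0 < q) {x : ℕ → X} {M : ℝ}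
    (hM : ∀ (n : ℕ) (ε : Fin n → Bool), ‖∑ k : Fin n, (if ε k then x k else -x k)‖ ≤ M) :
    Summable fun j => ‖x j‖ ^ q := by
  obtain ⟨C, hC, hcot⟩ := hX
  have hM0 : 0 ≤ M := (norm_nonneg _).trans (hM 0 Fin.elim0)
  refine summable_of_sum_range_le (c := (C * M) ^ q) (fun j => by positivity) fun n => ?_
  have hrad := rpow_one_div_two_mean_sq_le (fun ε => norm_nonneg _) (hM n)
  simp only [Fintype.card_fun, Fintype.card_bool, Fintype.card_fin, Nat.cast_pow,
    Nat.cast_ofNat] at hrad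
  have hcot_n := (hcot n fun k => x k).trans (mul_le_mul_of_nonneg_left hrad hC.le)
  rw [one_div, Real.rpow_inv_le_iff_of_pos (by positivity) (by positivity) hq] at hcot_n
  rwa [← Fin.sum_univ_eq_sum_range (fun k => ‖x k‖ ^ q)]

theorem Summable.norm_rpow_of_le {ι E : Type*} [NormedAddCommGroup E] {f : ι → E} {r s : ℝ}
    (hr : 0 < r) (hrs : r ≤ s) (hf : Summable fun i => ‖f i‖ ^ r) :
    Summable fun i => ‖f i‖ ^ s := by
  have hs : 0 < s := hr.trans_le hrs
  have hf' : Memℓp (E := fun _ => E) f (ENNReal.ofReal r) :=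
    (memℓp_gen_iff (by rwa [ENNReal.toReal_ofReal hr.le])).2
      (by rwa [ENNReal.toReal_ofReal hr.le])
  simpa [ENNReal.toReal_ofReal hs.le] using
    (memℓp_gen_iff (by rwa [ENNReal.toReal_ofReal hs.le])).1
      (hf'.of_exponent_ge (ENNReal.ofReal_le_ofReal hrs))

section Dual

variable {X : Type*} [NormedAddCommGroup X] [NormedSpace ℝ X] {s : ℝ}
  {xs : ℕ → X →L[ℝ] ℝ}

theorem abs_apply_rpow_le (hs : 0 ≤ s) (f : X →L[ℝ] ℝ) (y : X) :
    |f y| ^ s ≤ ‖f‖ ^ s * ‖y‖ ^ s := by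
  rw [← Real.mul_rpow (norm_nonneg _) (norm_nonneg _)]
  exact Real.rpow_le_rpow (abs_nonneg _) (f.le_opNorm y) hs

theorem summable_abs_apply_rpow (hs : 0 ≤ s) (hxs : Summable fun k => ‖xs k‖ ^ s) (y : X) :
    Summable fun k => |xs k y| ^ s :=
  (hxs.mul_right _).of_nonneg_of_le (fun _ => by positivity) fun k => abs_apply_rpow_le hs _ _

theorem tsum_abs_apply_rpow_le (hs : 0 ≤ s) (hxs : Summable fun k => ‖xs k‖ ^ s) (y : X) :
    ∑' k, |xs k y| ^ s ≤ (∑' k, ‖xs k‖ ^ s) * ‖y‖ ^ s := by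
  rw [← tsum_mul_right]
  exact (summable_abs_apply_rpow hs hxs y).tsum_le_tsum (fun k => abs_apply_rpow_le hs _ _)
    (hxs.mul_right _)

end Dual

theorem anisoSummable_of_summable_norm_rpow {X : Type*} [NormedAddCommGroup X]
    [NormedSpace ℝ X] {s q r : ℝ} (hq : 0 < q) (hr : 0 < r) (hrs : r ≤ s) {x : ℕ → X}
    (hx : Summable fun j => ‖x j‖ ^ q) : AnisoSummable s q r x := by
  intro xs hxs
  have hs : 0 < s := hr.trans_le hrs
  have hxs_s : Summable fun k => ‖xs k‖ ^ s := Summable.norm_rpow_of_le hr hrs hxs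
  refine ⟨fun j => summable_abs_apply_rpow hs.le hxs_s (x j), ?_⟩
  have hA : 0 ≤ ∑' k, ‖xs k‖ ^ s := tsum_nonneg fun k => by positivity
  refine (hx.mul_left ((∑' k, ‖xs k‖ ^ s) ^ (q / s))).of_nonneg_of_le
    (fun j => Real.rpow_nonneg (tsum_nonneg fun k => by positivity) _) fun j => ?_
  calc (∑' k, |xs k (x j)| ^ s) ^ (q / s) ≤ ((∑' k, ‖xs k‖ ^ s) * ‖x j‖ ^ s) ^ (q / s) :=
        Real.rpow_le_rpow (tsum_nonneg fun k => by positivity)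
          (tsum_abs_apply_rpow_le hs.le hxs_s _) (div_pos hq hs).le
    _ = (∑' k, ‖xs k‖ ^ s) ^ (q / s) * ‖x j‖ ^ q := by
        rw [Real.mul_rpow hA (by positivity), ← Real.rpow_mul (norm_nonneg _),
          mul_div_cancel₀ q hs.ne']

theorem stmt17_general {X : Type*} [NormedAddCommGroup X] [NormedSpace ℝ X]
    {s q r : ℝ} (hq2 : 2 ≤ q) (hr : 1 ≤ r) (hrs : r ≤ s)
    (hX : HasCotype q X) :
    ∀ x : ℕ → X, WeaklySummable 1 x → AnisoSummable s q r x := by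
  intro x hx
  have hq : 0 < q := by linarith
  obtain ⟨M, hM⟩ := hx.exists_norm_signed_sum_le
  exact anisoSummable_of_summable_norm_rpow hq (by linarith) hrs (hX.summable_norm_rpow hq hM)

theorem stmt17 {X : Type*} [NormedAddCommGroup X] [NormedSpace ℝ X] [CompleteSpace X]
    {s q r : ℝ} (hq2 : 2 ≤ q) (hqs : q < s) (hr : 1 ≤ r) (hrs : r ≤ s)
    (hX : HasCotype q X) :
    ∀ x : ℕ → X, WeaklySummable 1 x → AnisoSummable s q r x :=
  stmt17_general hq2 hr hrs hX
end
end
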